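/- Let k_z ≠ 0 and F smooth with F_ss + F_yy + k_z² F = 0. Then p = cosh(k_z z)·F(x−Vt,y) + (−(β/2)z² + (β/2)H²M − V)·y satisfies the Charney–Obukhov equation, and the boundary operator B[p] equals −(1/2)(∂_x F)(x−Vt,y)·β·(−sinh(k_z z)k_z z² + sinh(k_z z)k_z H² M + 2 cosh(k_z z)z). -/

import Mathlib

open Real

noncomputable section

/-- Partial derivative in `t` of `p t x y z`. -/
def pdt (p : ℝ → ℝ → ℝ → ℝ → ℝ) (t x y z : ℝ) : ℝ := deriv (fun t' => p t' x y z) t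
/-- Partial derivative in `x`. -/
def pdx (p : ℝ → ℝ → ℝ → ℝ → ℝ) (t x y z : ℝ) : ℝ := deriv (fun x' => p t x' y z) x
/-- Partial derivative in `y`. -/
def pdy (p : ℝ → ℝ → ℝ → ℝ → ℝ) (t x y z : ℝ) : ℝ := deriv (fun y' => p t x y' z) y
/-- Partial derivative in `z`. -/
def pdz (p : ℝ → ℝ → ℝ → ℝ → ℝ) (t x y z : ℝ) : ℝ := deriv (fun z' => p t x y z') z

/-- Spatial Laplacian in `(x, y, z)`. -/
def lap3d (p : ℝ → ℝ → ℝ → ℝ → ℝ) (t x y z : ℝ) : ℝ :=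
  pdx (pdx p) t x y z + pdy (pdy p) t x y z + pdz (pdz p) t x y z

/-- Charney–Obukhov operator. -/
def CO (β : ℝ) (p : ℝ → ℝ → ℝ → ℝ → ℝ) (t x y z : ℝ) : ℝ :=
  pdt (lap3d p) t x y z + pdx p t x y z * pdy (lap3d p) t x y z
    - pdy p t x y z * pdx (lap3d p) t x y z + β * pdx p t x y z

/-- Boundary condition operator `p_{zt} − p_y p_{zx} + p_x p_{zy}`. -/
def Bop (p : ℝ → ℝ → ℝ → ℝ → ℝ) (t x y z : ℝ) : ℝ :=
  pdt (pdz p) t x y z - pdy p t x y z * pdx (pdz p) t x y z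
    + pdx p t x y z * pdy (pdz p) t x y z

/-- Partial derivative in the first variable `s` of a two-variable function. -/
def dS (F : ℝ → ℝ → ℝ) (s y : ℝ) : ℝ := deriv (fun s' => F s' y) s
/-- Partial derivative in the second variable `y` of a two-variable function. -/
def dY (F : ℝ → ℝ → ℝ) (s y : ℝ) : ℝ := deriv (fun y' => F s y') y

/-- Smoothness of a two-variable function. -/
def Smooth2 (F : ℝ → ℝ → ℝ) : Prop := ContDiff ℝ (⊤ : ℕ∞) (fun q : ℝ × ℝ => F q.1 q.2)

lemma hasDerivAt_dS (F : ℝ → ℝ → ℝ) (hF : Smooth2 F) (s y : ℝ) :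
    HasDerivAt (fun s' => F s' y) (dS F s y) s := by
  have hd := (hF.differentiable (by simp) (s, y)).hasFDerivAt
  have h1 : HasDerivAt (fun s' : ℝ => (s', y)) ((1:ℝ), (0:ℝ)) s :=
    HasDerivAt.prodMk (hasDerivAt_id s) (hasDerivAt_const s y)
  have h2 := hd.comp_hasDerivAt s h1
  have : dS F s y = fderiv ℝ (fun q : ℝ × ℝ => F q.1 q.2) (s, y) (1, 0) := h2.deriv
  rw [this]; exact h2

lemma hasDerivAt_dY (F : ℝ → ℝ → ℝ) (hF : Smooth2 F) (s y : ℝ) :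
    HasDerivAt (fun y' => F s y') (dY F s y) y := by
  have hd := (hF.differentiable (by simp) (s, y)).hasFDerivAt
  have h1 : HasDerivAt (fun y' : ℝ => (s, y')) ((0:ℝ), (1:ℝ)) y :=
    HasDerivAt.prodMk (hasDerivAt_const y s) (hasDerivAt_id y)
  have h2 := hd.comp_hasDerivAt y h1
  have : dY F s y = fderiv ℝ (fun q : ℝ × ℝ => F q.1 q.2) (s, y) (0, 1) := h2.deriv
  rw [this]; exact h2

lemma dS_eq (F : ℝ → ℝ → ℝ) (hF : Smooth2 F) (s y : ℝ) :
    dS F s y = fderiv ℝ (fun q : ℝ × ℝ => F q.1 q.2) (s, y) (1, 0) := by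
  have hd := (hF.differentiable (by simp) (s, y)).hasFDerivAt
  have h1 : HasDerivAt (fun s' : ℝ => (s', y)) ((1:ℝ), (0:ℝ)) s :=
    HasDerivAt.prodMk (hasDerivAt_id s) (hasDerivAt_const s y)
  exact (hd.comp_hasDerivAt s h1).deriv

lemma dY_eq (F : ℝ → ℝ → ℝ) (hF : Smooth2 F) (s y : ℝ) :
    dY F s y = fderiv ℝ (fun q : ℝ × ℝ => F q.1 q.2) (s, y) (0, 1) := by
  have hd := (hF.differentiable (by simp) (s, y)).hasFDerivAt
  have h1 : HasDerivAt (fun y' : ℝ => (s, y')) ((0:ℝ), (1:ℝ)) y :=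
    HasDerivAt.prodMk (hasDerivAt_const y s) (hasDerivAt_id y)
  exact (hd.comp_hasDerivAt y h1).deriv

lemma smooth2_dS (F : ℝ → ℝ → ℝ) (hF : Smooth2 F) : Smooth2 (dS F) := by
  have : (fun q : ℝ × ℝ => dS F q.1 q.2)
      = fun q : ℝ × ℝ => fderiv ℝ (fun q : ℝ × ℝ => F q.1 q.2) q (1, 0) := by
    funext q; exact dS_eq F hF q.1 q.2
  rw [Smooth2, this]
  exact (hF.fderiv_right (m := (⊤ : ℕ∞)) (by simp)).clm_apply contDiff_const

lemma smooth2_dY (F : ℝ → ℝ → ℝ) (hF : Smooth2 F) : Smooth2 (dY F) := by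
  have : (fun q : ℝ × ℝ => dY F q.1 q.2)
      = fun q : ℝ × ℝ => fderiv ℝ (fun q : ℝ × ℝ => F q.1 q.2) q (0, 1) := by
    funext q; exact dY_eq F hF q.1 q.2
  rw [Smooth2, this]
  exact (hF.fderiv_right (m := (⊤ : ℕ∞)) (by simp)).clm_apply contDiff_const

lemma hasDerivAt_shift_t (F : ℝ → ℝ → ℝ) (hF : Smooth2 F) (V t x y : ℝ) :
    HasDerivAt (fun t' => F (x - V * t') y) (dS F (x - V * t) y * (-V)) t := by
  have h1 : HasDerivAt (fun t' : ℝ => x - V * t') (-V) t := by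
    simpa using ((hasDerivAt_id t).const_mul V).const_sub x
  exact (hasDerivAt_dS F hF (x - V * t) y).comp t h1

lemma hasDerivAt_shift_x (F : ℝ → ℝ → ℝ) (hF : Smooth2 F) (c x y : ℝ) :
    HasDerivAt (fun x' => F (x' - c) y) (dS F (x - c) y) x := by
  have h1 : HasDerivAt (fun x' : ℝ => x' - c) 1 x := (hasDerivAt_id x).sub_const c
  simpa [Function.comp_def] using (hasDerivAt_dS F hF (x - c) y).comp x h1


lemma hasDerivAt_const_mul_id (c y : ℝ) : HasDerivAt (fun y' : ℝ => c * y') c y := by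
  simpa using (hasDerivAt_id y).const_mul c

/-- Solution 9 satisfies the Charney–Obukhov equation, and
the boundary operator on it. -/
theorem stmt_16 (F : ℝ → ℝ → ℝ) (kz V β M H : ℝ)
    (hkz : kz ≠ 0) (hF : Smooth2 F)
    (hHelm : ∀ s y, dS (dS F) s y + dY (dY F) s y + kz ^ 2 * F s y = 0) :
    (∀ t x y z, CO β
      (fun t x y z => Real.cosh (kz * z) * F (x - V * t) y
        + (-(β / 2) * z ^ 2 + (β / 2) * H ^ 2 * M - V) * y)
      t x y z = 0) ∧
    (∀ t x y z, Bop
      (fun t x y z => Real.cosh (kz * z) * F (x - V * t) y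
        + (-(β / 2) * z ^ 2 + (β / 2) * H ^ 2 * M - V) * y)
      t x y z = -(1 / 2) * dS F (x - V * t) y * β
        * (-(Real.sinh (kz * z) * kz * z ^ 2)
          + Real.sinh (kz * z) * kz * H ^ 2 * M
          + 2 * Real.cosh (kz * z) * z)) := by
  set p : ℝ → ℝ → ℝ → ℝ → ℝ := fun t x y z => Real.cosh (kz * z) * F (x - V * t) y
    + (-(β / 2) * z ^ 2 + (β / 2) * H ^ 2 * M - V) * y with hp
  have hFs := smooth2_dS F hF
  have hFy := smooth2_dY F hF
  -- first partials
  have Hx : ∀ t x y z, pdx p t x y z = Real.cosh (kz * z) * dS F (x - V * t) y := by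
    intro t x y z
    have h := ((hasDerivAt_shift_x F hF (V * t) x y).const_mul
      (Real.cosh (kz * z))).add_const ((-(β / 2) * z ^ 2 + (β / 2) * H ^ 2 * M - V) * y)
    exact h.deriv
  have Hy : ∀ t x y z, pdy p t x y z = Real.cosh (kz * z) * dY F (x - V * t) y
      + (-(β / 2) * z ^ 2 + (β / 2) * H ^ 2 * M - V) := by
    intro t x y z
    have h := ((hasDerivAt_dY F hF (x - V * t) y).const_mul (Real.cosh (kz * z))).add
      (hasDerivAt_const_mul_id (-(β / 2) * z ^ 2 + (β / 2) * H ^ 2 * M - V) y)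
    show deriv (fun y' => Real.cosh (kz * z) * F (x - V * t) y'
      + (-(β / 2) * z ^ 2 + (β / 2) * H ^ 2 * M - V) * y') y = _
    exact h.deriv
  have Hz : ∀ t x y z, pdz p t x y z
      = Real.sinh (kz * z) * kz * F (x - V * t) y + (-(β * z)) * y := by
    intro t x y z
    have hc : HasDerivAt (fun z' => Real.cosh (kz * z')) (Real.sinh (kz * z) * kz) z := by
      simpa using (((hasDerivAt_id z).const_mul kz).cosh)
    have hq : HasDerivAt (fun z' : ℝ => (-(β / 2) * z' ^ 2 + (β / 2) * H ^ 2 * M - V) * y)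
        ((-(β / 2) * (2 * z ^ 1)) * y) z := by
      exact ((((hasDerivAt_pow 2 z).const_mul (-(β / 2))).add_const
        ((β / 2) * H ^ 2 * M)).sub_const V).mul_const y
    have h := (hc.mul_const (F (x - V * t) y)).add hq
    have := h.deriv
    simp only [pdz]
    rw [show deriv (fun z' => p t x y z') z = _ from this]; ring
  -- second partials
  have Hxx : ∀ t x y z, pdx (pdx p) t x y z
      = Real.cosh (kz * z) * dS (dS F) (x - V * t) y := by
    intro t x y z
    have e : (fun x' => pdx p t x' y z)
        = fun x' => Real.cosh (kz * z) * dS F (x' - V * t) y := by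
      funext x'; exact Hx t x' y z
    have h := (hasDerivAt_shift_x (dS F) hFs (V * t) x y).const_mul (Real.cosh (kz * z))
    show deriv (fun x' => pdx p t x' y z) x = _
    rw [e, h.deriv]
  have Hyy : ∀ t x y z, pdy (pdy p) t x y z
      = Real.cosh (kz * z) * dY (dY F) (x - V * t) y := by
    intro t x y z
    have e : (fun y' => pdy p t x y' z)
        = fun y' => Real.cosh (kz * z) * dY F (x - V * t) y'
          + (-(β / 2) * z ^ 2 + (β / 2) * H ^ 2 * M - V) := by
      funext y'; exact Hy t x y' z
    have h := (((hasDerivAt_dY (dY F) hFy (x - V * t) y).const_mul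
      (Real.cosh (kz * z)))).add_const (-(β / 2) * z ^ 2 + (β / 2) * H ^ 2 * M - V)
    show deriv (fun y' => pdy p t x y' z) y = _
    rw [e, h.deriv]
  have Hzz : ∀ t x y z, pdz (pdz p) t x y z
      = kz ^ 2 * Real.cosh (kz * z) * F (x - V * t) y - β * y := by
    intro t x y z
    have e : (fun z' => pdz p t x y z')
        = fun z' => Real.sinh (kz * z') * kz * F (x - V * t) y + (-(β * z')) * y := by
      funext z'; exact Hz t x y z'
    have hs : HasDerivAt (fun z' => Real.sinh (kz * z')) (Real.cosh (kz * z) * kz) z := by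
      simpa using (((hasDerivAt_id z).const_mul kz).sinh)
    have h := ((hs.mul_const kz).mul_const (F (x - V * t) y)).add
      ((hasDerivAt_const_mul_id β z).neg.mul_const y)
    show deriv (fun z' => pdz p t x y z') z = _
    rw [e, show deriv (fun z' => Real.sinh (kz * z') * kz * F (x - V * t) y + (-(β * z')) * y) z = _
      from h.deriv]; ring
  have Hlap : ∀ t x y z, lap3d p t x y z = -β * y := by
    intro t x y z
    have h := hHelm (x - V * t) y
    simp only [lap3d, Hxx, Hyy, Hzz]
    linear_combination Real.cosh (kz * z) * h
  have Hlt : ∀ t x y z, pdt (lap3d p) t x y z = 0 := by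
    intro t x y z
    have e : (fun t' => lap3d p t' x y z) = fun _ => -β * y := by
      funext t'; exact Hlap t' x y z
    simp only [pdt, e, deriv_const]
  have Hlx : ∀ t x y z, pdx (lap3d p) t x y z = 0 := by
    intro t x y z
    have e : (fun x' => lap3d p t x' y z) = fun _ => -β * y := by
      funext x'; exact Hlap t x' y z
    simp only [pdx, e, deriv_const]
  have Hly : ∀ t x y z, pdy (lap3d p) t x y z = -β := by
    intro t x y z
    have e : (fun y' => lap3d p t x y' z) = fun y' => -β * y' := by
      funext y'; exact Hlap t x y' z
    have h := hasDerivAt_const_mul_id (-β) y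
    show deriv (fun y' => lap3d p t x y' z) y = _
    rw [e, h.deriv]
  constructor
  · intro t x y z
    simp only [CO, Hlt, Hlx, Hly, Hx]
    ring
  · intro t x y z
    have Hzt : pdt (pdz p) t x y z
        = Real.sinh (kz * z) * kz * (dS F (x - V * t) y * (-V)) := by
      have e : (fun t' => pdz p t' x y z)
          = fun t' => Real.sinh (kz * z) * kz * F (x - V * t') y + (-(β * z)) * y := by
        funext t'; exact Hz t' x y z
      have h := ((hasDerivAt_shift_t F hF V t x y).const_mul
        (Real.sinh (kz * z) * kz)).add_const ((-(β * z)) * y)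
      simp only [pdt]
      rw [e, h.deriv]
    have Hzx : pdx (pdz p) t x y z = Real.sinh (kz * z) * kz * dS F (x - V * t) y := by
      have e : (fun x' => pdz p t x' y z)
          = fun x' => Real.sinh (kz * z) * kz * F (x' - V * t) y + (-(β * z)) * y := by
        funext x'; exact Hz t x' y z
      have h := ((hasDerivAt_shift_x F hF (V * t) x y).const_mul
        (Real.sinh (kz * z) * kz)).add_const ((-(β * z)) * y)
      simp only [pdx]
      rw [e, h.deriv]
    have Hzy : pdy (pdz p) t x y z
        = Real.sinh (kz * z) * kz * dY F (x - V * t) y + (-(β * z)) := by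
      have e : (fun y' => pdz p t x y' z)
          = fun y' => Real.sinh (kz * z) * kz * F (x - V * t) y' + (-(β * z)) * y' := by
        funext y'; exact Hz t x y' z
      have h := ((hasDerivAt_dY F hF (x - V * t) y).const_mul
        (Real.sinh (kz * z) * kz)).add (hasDerivAt_const_mul_id (-(β * z)) y)
      show deriv (fun y' => pdz p t x y' z) y = _
      rw [e]; exact h.deriv
    simp only [Bop, Hzt, Hzx, Hzy, Hx, Hy]
    ring
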